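/- arXiv:2011.02747 — 9 statements merged into one kernel-verified Lean document; each statement's English description precedes it below -/
import Mathlib

section
/- Under the joint law of (X, Y₁, …, Y_K) described in the context, the estimation error Z̃ = X − Ŷ of the select-max estimator is one-sided exponentially distributed with rate λ + K·δ: the pushforward of the joint law under (x, y₁, …, y_K) ↦ x − max{y₁, …, y_K} equals Exp(λ + Kδ), where λ + Kδ = K/D − (K−1)λ. -/
/-!
Given `X = x ≥ 0`, the error `x − max Yᵢ` is at least `z` iff every `Yᵢ ≤ x − z`. The channel
`κ(x)` gives `(−∞, x − z]` mass `e^{−δ max(z, 0)}` when `z ≤ x` and mass `0` otherwise, so by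
conditional independence `P(Z̃ ≥ z | X = x) = 1{z ≤ x} e^{−Kδ max(z, 0)}`. Averaging against
`Exp(λ)`, whose tail is `P(X ≥ z) = e^{−λ max(z, 0)}`, yields `e^{−(λ + Kδ) max(z, 0)}`, the tail of
`Exp(λ + Kδ)`; a finite measure on `ℝ` is determined by its values on the rays `[z, ∞)`.
-/

open MeasureTheory

/-- The one-sided exponential distribution `Exp(r)`, with density `r·e^{−r x}` on `x ≥ 0`. -/
noncomputable def expMeasure (r : ℝ) : Measure ℝ :=
  volume.withDensity fun x => if 0 ≤ x then ENNReal.ofReal (r * Real.exp (-r * x)) else 0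

/-- The forward test channel `κ(x)` of the one-sided exponential source: an atom of mass
`e^{−δx}` at `0` plus the density `y ↦ δ·e^{−δ(x−y)}` on the interval `(0, x]`. -/
noncomputable def expChannel (δ : ℝ) (x : ℝ) : Measure ℝ :=
  (ENNReal.ofReal (Real.exp (-δ * x))) • Measure.dirac 0 +
    volume.withDensity
      ((Set.Ioc (0 : ℝ) x).indicator fun y => ENNReal.ofReal (δ * Real.exp (-δ * (x - y))))

/-- The joint law of `(X, Y₁, …, Y_K)`: the composition of `Exp(λ)` (the law of `X`) with the
`K`-fold product kernel `x ↦ κ(x)^{⊗K}`, so that `Y₁, …, Y_K` are conditionally i.i.d. given `X`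
with conditional law `κ(X)`. -/
noncomputable def jointLaw (lam δ : ℝ) (K : ℕ) : Measure (ℝ × (Fin K → ℝ)) :=
  (expMeasure lam).bind fun x =>
    (Measure.pi fun _ : Fin K => expChannel δ x).map fun ys => (x, ys)

open Set Real

lemma expMeasure_eq_probabilityTheory_expMeasure (r : ℝ) :
    expMeasure r = ProbabilityTheory.expMeasure r := by
  refine congrArg volume.withDensity (funext fun x => ?_)
  show _ = ProbabilityTheory.exponentialPDF r x
  rw [ProbabilityTheory.exponentialPDF_eq]
  split_ifs <;> simp [neg_mul]

lemma isProbabilityMeasure_expMeasure {r : ℝ} (hr : 0 < r) :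
    IsProbabilityMeasure (expMeasure r) := by
  rw [expMeasure_eq_probabilityTheory_expMeasure]
  exact ProbabilityTheory.isProbabilityMeasure_expMeasure hr

lemma expMeasure_Ici {r : ℝ} (hr : 0 < r) (z : ℝ) :
    expMeasure r (Ici z) = ENNReal.ofReal (exp (-r * max z 0)) := by
  have := isProbabilityMeasure_expMeasure hr
  have hIio : expMeasure r (Iio z) = expMeasure r (Iic z) := by
    simp only [expMeasure, withDensity_apply _ measurableSet_Iio,
      withDensity_apply _ measurableSet_Iic, Measure.restrict_congr_set Iio_ae_eq_Iic]
  rw [← compl_Iio, prob_compl_eq_one_sub measurableSet_Iio, hIio, ← ProbabilityTheory.ofReal_cdf,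
    expMeasure_eq_probabilityTheory_expMeasure, ProbabilityTheory.cdf_expMeasure_eq hr]
  split_ifs with hz
  · rw [max_eq_left hz, ← ENNReal.ofReal_one, ← ENNReal.ofReal_sub _
      (sub_nonneg.2 (exp_le_one_iff.2 (by nlinarith)))]
    ring_nf
  · simp [max_eq_right (not_le.1 hz).le]

section Channel

variable {δ x : ℝ}

lemma setLIntegral_Ioc_ofReal_mul_exp (hδ : 0 ≤ δ) {a b : ℝ} (hab : a ≤ b) :
    ∫⁻ y in Ioc a b, ENNReal.ofReal (δ * exp (-δ * (x - y)))
      = ENNReal.ofReal (exp (-δ * (x - b)) - exp (-δ * (x - a))) := by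
  have hcont : Continuous fun y => δ * exp (-δ * (x - y)) := by fun_prop
  have hderiv (y : ℝ) : HasDerivAt (fun y => exp (-δ * (x - y))) (δ * exp (-δ * (x - y))) y := by
    simpa [mul_comm] using (((hasDerivAt_id y).const_sub x).const_mul (-δ)).exp
  rw [← ofReal_integral_eq_lintegral_ofReal hcont.integrableOn_Ioc
      (ae_of_all _ fun y => by positivity), ← intervalIntegral.integral_of_le hab,
    intervalIntegral.integral_eq_sub_of_hasDerivAt (fun y _ => hderiv y)
      (hcont.intervalIntegrable _ _)]

lemma expChannel_apply (δ x : ℝ) {s : Set ℝ} (hs : MeasurableSet s) :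
    expChannel δ x s = ENNReal.ofReal (exp (-δ * x)) * s.indicator 1 0 +
      ∫⁻ y in Ioc 0 x ∩ s, ENNReal.ofReal (δ * exp (-δ * (x - y))) := by
  rw [expChannel, Measure.add_apply, Measure.smul_apply, smul_eq_mul,
    Measure.dirac_apply' _ hs, withDensity_apply _ hs,
    lintegral_indicator measurableSet_Ioc, Measure.restrict_restrict measurableSet_Ioc]

lemma expChannel_Iic (hδ : 0 ≤ δ) (hx : 0 ≤ x) (c : ℝ) :
    expChannel δ x (Iic c) = if 0 ≤ c then ENNReal.ofReal (exp (-δ * max (x - c) 0)) else 0 := by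
  rw [expChannel_apply δ x measurableSet_Iic, Ioc_inter_Iic]
  split_ifs with hc
  · rw [setLIntegral_Ioc_ofReal_mul_exp hδ (le_min hx hc), indicator_of_mem (mem_Iic.2 hc),
      Pi.one_apply, mul_one, ← ENNReal.ofReal_add (exp_nonneg _), sub_zero, add_sub_cancel]
    · congr 3
      rcases le_total x c with h | h <;> simp [h]
    · exact sub_nonneg.2 (exp_le_exp.2 (by nlinarith [mul_nonneg hδ (le_min hx hc)]))
  · have hempty : Ioc 0 (min x c) = ∅ := Ioc_eq_empty (by simp [(not_le.1 hc).le])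
    simp [hempty, indicator_of_notMem (show (0 : ℝ) ∉ Iic c from hc)]

instance isFiniteMeasure_expChannel (δ x : ℝ) : IsFiniteMeasure (expChannel δ x) := by
  have hcont : Continuous fun y => δ * exp (-δ * (x - y)) := by fun_prop
  have := isFiniteMeasure_withDensity_ofReal
    (hcont.integrableOn_Ioc (μ := volume) (a := 0) (b := x)).2
  have := (Measure.dirac (0 : ℝ)).smul_finite (ENNReal.ofReal_ne_top (r := exp (-δ * x)))
  rw [expChannel, withDensity_indicator measurableSet_Ioc]
  infer_instance

lemma measurable_expChannel (δ : ℝ) : Measurable (expChannel δ) := by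
  refine (Measurable.smul_measure (by fun_prop) _).add (measurable_withDensity ?_)
  refine Measurable.indicator (by fun_prop) ?_
  exact measurableSet_lt measurable_const measurable_snd |>.inter
    (measurableSet_le measurable_snd measurable_fst)

end Channel

section Measurability

variable {α β : Type*} [MeasurableSpace α] [MeasurableSpace β]

lemma measurable_measure_pi {ι : Type*} [Fintype ι] {X : ι → Type*}
    [∀ i, MeasurableSpace (X i)] {μ : α → (i : ι) → Measure (X i)}
    [∀ a i, IsFiniteMeasure (μ a i)] (hμ : ∀ i, Measurable fun a => μ a i) :
    Measurable fun a => Measure.pi (μ a) := by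
  have h_box {t : (i : ι) → Set (X i)} (ht : ∀ i, MeasurableSet (t i)) :
      Measurable fun a => Measure.pi (μ a) (univ.pi t) := by
    simp_rw [Measure.pi_pi]
    exact Finset.measurable_prod _ fun i _ => (Measure.measurable_coe (ht i)).comp (hμ i)
  refine .measure_of_isPiSystem generateFrom_pi.symm isPiSystem_pi ?_ ?_
  · rintro _ ⟨t, ht, rfl⟩
    exact h_box fun i => ht i (mem_univ i)
  · simpa only [pi_univ] using h_box fun _ => MeasurableSet.univ

lemma measurable_map_prodMk {ν : α → Measure β} [∀ a, IsFiniteMeasure (ν a)]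
    (hν : Measurable ν) : Measurable fun a => (ν a).map (Prod.mk a) := by
  refine Measure.measurable_of_measurable_coe _ fun s hs => ?_
  simp_rw [Measure.map_apply measurable_prodMk_left hs]
  exact ProbabilityTheory.Kernel.measurable_kernel_prodMk_left_of_finite (κ := ⟨ν, hν⟩) hs
    inferInstance

end Measurability

lemma jointLaw_apply (lam δ : ℝ) (K : ℕ) {s : Set (ℝ × (Fin K → ℝ))} (hs : MeasurableSet s) :
    jointLaw lam δ K s
      = ∫⁻ x, Measure.pi (fun _ => expChannel δ x) (Prod.mk x ⁻¹' s) ∂expMeasure lam := by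
  have hκ := measurable_map_prodMk
    (measurable_measure_pi fun (_ : Fin K) => measurable_expChannel δ)
  rw [jointLaw, Measure.bind_apply hs hκ.aemeasurable]
  simp_rw [Measure.map_apply measurable_prodMk_left hs]

lemma ae_nonneg_expMeasure (r : ℝ) : ∀ᵐ x ∂expMeasure r, 0 ≤ x := by
  refine (ae_withDensity_iff (.ite measurableSet_Ici (by fun_prop) measurable_const)).2
    (ae_of_all _ fun x hx => ?_)
  by_contra h
  exact hx (if_neg h)

section SelectMax

variable {ι : Type*}

noncomputable def selectMaxError (p : ℝ × (ι → ℝ)) : ℝ :=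
  p.1 - ⨆ i, p.2 i

lemma measurable_selectMaxError [Countable ι] : Measurable (selectMaxError (ι := ι)) :=
  measurable_fst.sub (Measurable.iSup fun i => (measurable_pi_apply i).comp measurable_snd)

lemma preimage_selectMaxError_Ici [Finite ι] [Nonempty ι] (x z : ℝ) :
    Prod.mk x ⁻¹' (selectMaxError ⁻¹' Ici z) = univ.pi fun _ : ι => Iic (x - z) := by
  ext ys
  simp only [selectMaxError, mem_preimage, mem_Ici, mem_univ_pi, mem_Iic]
  rw [le_sub_comm, ciSup_le_iff (finite_range ys).bddAbove]

lemma pi_expChannel_preimage_selectMaxError_Ici [Fintype ι] [Nonempty ι] {δ x : ℝ} (hδ : 0 ≤ δ)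
    (hx : 0 ≤ x) (z : ℝ) :
    Measure.pi (fun _ : ι => expChannel δ x) (Prod.mk x ⁻¹' (selectMaxError ⁻¹' Ici z))
      = (Ici z).indicator (fun _ => ENNReal.ofReal (exp (-δ * max z 0)) ^ Fintype.card ι) x := by
  rw [preimage_selectMaxError_Ici, Measure.pi_pi, Finset.prod_const, Finset.card_univ,
    expChannel_Iic hδ hx, sub_sub_cancel]
  by_cases hz : z ≤ x <;> simp [hz]

end SelectMax

lemma jointLaw_map_selectMaxError_Ici {lam δ : ℝ} (hlam : 0 < lam) (hδ : 0 ≤ δ) {K : ℕ}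
    (hK : 1 ≤ K) (z : ℝ) :
    (jointLaw lam δ K).map selectMaxError (Ici z)
      = ENNReal.ofReal (exp (-(lam + K * δ) * max z 0)) := by
  have : Nonempty (Fin K) := Fin.pos_iff_nonempty.mp hK
  have hs := measurable_selectMaxError (ι := Fin K) (measurableSet_Ici (a := z))
  rw [Measure.map_apply measurable_selectMaxError measurableSet_Ici, jointLaw_apply _ _ _ hs]
  calc _ = ∫⁻ x, (Ici z).indicator (fun _ => ENNReal.ofReal (exp (-δ * max z 0)) ^ K) x
          ∂expMeasure lam := by
        refine lintegral_congr_ae ?_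
        filter_upwards [ae_nonneg_expMeasure lam] with x hx
        rw [pi_expChannel_preimage_selectMaxError_Ici hδ hx, Fintype.card_fin]
    _ = _ := by
        rw [lintegral_indicator_const measurableSet_Ici, expMeasure_Ici hlam,
          ← ENNReal.ofReal_pow (exp_nonneg _), ← ENNReal.ofReal_mul (by positivity),
          ← exp_nat_mul, ← exp_add]
        ring_nf

/-- the estimation error `Z̃ = X − Ŷ` of the select-max estimator
`Ŷ = max{Y₁,…,Y_K}` is one-sided exponentially distributed with rate `λ + K·δ`:
the pushforward of the joint law under `(x, ys) ↦ x − max_i ys i` equals `Exp(λ + Kδ)`,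
where `λ + Kδ = K/D − (K−1)λ`. -/
theorem selectMax_error_exponential (lam D : ℝ) (hlam : 0 < lam) (hD : 0 < D)
    (hD' : D < 1 / lam) (K : ℕ) (hK : 1 ≤ K) :
    (jointLaw lam (1 / D - lam) K).map (fun p => p.1 - ⨆ i, p.2 i)
      = expMeasure (lam + K * (1 / D - lam)) := by
  have hδ : 0 ≤ 1 / D - lam := by
    rw [sub_nonneg, le_div_iff₀ hD, mul_comm]
    exact ((lt_div_iff₀ hlam).1 hD').le
  have hr : 0 < lam + K * (1 / D - lam) := by positivity
  have := isProbabilityMeasure_expMeasure hr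
  refine (Measure.ext_of_Ici _ _ fun z => ?_).symm
  rw [expMeasure_Ici hr]
  exact (jointLaw_map_selectMaxError_Ici hlam hδ hK z).symm
end

section
/- Let p > 0, α > 0, 0 < D ≤ α, and let K ≥ 1 be an integer. Then ∫_ℝ [ (α/D)·e^{−|x|^p/(2D^p)}·e^{|x|^p/(2α^p)}·(D/α)^{p+1} ]^K · (c_p/α)·e^{−|x|^p/(2α^p)} dx = D·(D/α)^{pK}·(D^p + K·α^p − K·D^p)^{−1/p}. This is the probability that all K outputs of the parallel generalized-Gaussian test channels equal zero. -/
open MeasureTheory Real Set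

/-- The normalizing constant `c_p = p / (2^{(p+1)/p} · Γ(1/p))` of the generalized Gaussian
density `x ↦ (c_p/α)·e^{−|x|^p/(2α^p)}` of `N_p(0, α^p)`. -/
noncomputable def genGaussConst (p : ℝ) : ℝ :=
  p / ((2 : ℝ) ^ ((p + 1) / p) * Real.Gamma (1 / p))

lemma integral_exp_neg_mul_abs_rpow {p b : ℝ} (hp : 0 < p) (hb : 0 < b) :
    ∫ x : ℝ, Real.exp (-b * |x| ^ p) = 2 * (b ^ (-1 / p) * Real.Gamma (1 / p + 1)) := by
  rw [show (fun x : ℝ => Real.exp (-b * |x| ^ p))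
      = fun x : ℝ => (fun t : ℝ => Real.exp (-b * t ^ p)) |x| from rfl,
    integral_comp_abs (f := fun t : ℝ => Real.exp (-b * t ^ p)),
    integral_exp_neg_mul_rpow hp hb]

theorem genGauss_prob_all_zero (p α D : ℝ) (hp : 0 < p) (hα : 0 < α) (hD : 0 < D)
    (hDα : D ≤ α) (K : ℕ) (hK : 1 ≤ K) :
    ∫ x : ℝ,
        ((α / D) * Real.exp (-(|x| ^ p) / (2 * D ^ p)) * Real.exp ((|x| ^ p) / (2 * α ^ p)) *
              (D / α) ^ (p + 1)) ^ K *
          ((genGaussConst p / α) * Real.exp (-(|x| ^ p) / (2 * α ^ p)))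
      = D * (D / α) ^ (p * K) * (D ^ p + K * α ^ p - K * D ^ p) ^ (-(1 / p)) := by
  have hDp : (0:ℝ) < D ^ p := rpow_pos_of_pos hD p
  have hαp : (0:ℝ) < α ^ p := rpow_pos_of_pos hα p
  have hK1 : (1:ℝ) ≤ (K:ℝ) := by exact_mod_cast hK
  set S : ℝ := D ^ p + K * α ^ p - K * D ^ p with hS
  have hSpos : 0 < S := by
    have h1 : D ^ p ≤ α ^ p := rpow_le_rpow hD.le hDα hp.le
    have : (K:ℝ) * D ^ p ≤ (K:ℝ) * α ^ p :=
      mul_le_mul_of_nonneg_left h1 (by positivity)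
    nlinarith
  set b : ℝ := S / (2 * D ^ p * α ^ p) with hb
  have hbpos : 0 < b := by positivity
  set C : ℝ := ((α / D) * (D / α) ^ (p + 1)) ^ K * (genGaussConst p / α) with hC
  have key : ∀ x : ℝ,
      ((α / D) * Real.exp (-(|x| ^ p) / (2 * D ^ p)) * Real.exp ((|x| ^ p) / (2 * α ^ p)) *
            (D / α) ^ (p + 1)) ^ K *
        ((genGaussConst p / α) * Real.exp (-(|x| ^ p) / (2 * α ^ p)))
      = C * Real.exp (-b * |x| ^ p) := by
    intro x
    set t : ℝ := |x| ^ p with ht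
    have e1 : ((α / D) * Real.exp (-t / (2 * D ^ p)) * Real.exp (t / (2 * α ^ p)) *
            (D / α) ^ (p + 1)) ^ K
        = ((α / D) * (D / α) ^ (p + 1)) ^ K *
            Real.exp ((K:ℝ) * (-t / (2 * D ^ p) + t / (2 * α ^ p))) := by
      have e0 : (α / D) * Real.exp (-t / (2 * D ^ p)) * Real.exp (t / (2 * α ^ p)) *
            (D / α) ^ (p + 1)
          = ((α / D) * (D / α) ^ (p + 1)) *
              Real.exp (-t / (2 * D ^ p) + t / (2 * α ^ p)) := by
        rw [Real.exp_add]; ring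
      rw [e0, mul_pow, ← Real.exp_nat_mul]
    have e3 : (K:ℝ) * (-t / (2 * D ^ p) + t / (2 * α ^ p)) + (-t / (2 * α ^ p)) = -b * t := by
      rw [hb, hS]; field_simp; ring
    rw [e1, ← e3, Real.exp_add, hC]; ring
  simp_rw [key]
  rw [integral_const_mul, integral_exp_neg_mul_abs_rpow hp hbpos]
  -- algebraic pieces
  have h1 : ((α / D) * (D / α) ^ (p + 1)) ^ K = (D / α) ^ (p * K) := by
    have e : (α / D) * (D / α) ^ (p + 1) = (D / α) ^ p := by
      rw [Real.rpow_add (by positivity), Real.rpow_one]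
      field_simp
    rw [e, ← Real.rpow_natCast ((D / α) ^ p) K, ← Real.rpow_mul (by positivity)]
  have h2 : b ^ (-1 / p) = 2 ^ ((1:ℝ) / p) * D * α * S ^ (-(1 / p)) := by
    have e2 : (2 * D ^ p * α ^ p : ℝ) ^ ((1:ℝ) / p) = 2 ^ ((1:ℝ)/p) * D * α := by
      rw [Real.mul_rpow (by positivity) (by positivity),
        Real.mul_rpow (by positivity) (by positivity),
        ← Real.rpow_mul hD.le, ← Real.rpow_mul hα.le, mul_one_div, div_self hp.ne',
        Real.rpow_one, Real.rpow_one]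
    rw [hb, neg_div, Real.rpow_neg (by positivity), Real.div_rpow hSpos.le (by positivity),
      inv_div, e2, div_eq_mul_inv, ← Real.rpow_neg hSpos.le]
  have hg : 0 < Real.Gamma (1 / p) := Real.Gamma_pos_of_pos (by positivity)
  have h3 : genGaussConst p * (2 * Real.Gamma (1 / p + 1)) = 2 ^ (-(1:ℝ) / p) := by
    rw [genGaussConst, Real.Gamma_add_one (one_div_ne_zero hp.ne'),
      show (p + 1) / p = 1 + 1 / p by field_simp,
      Real.rpow_add two_pos, Real.rpow_one, neg_div,
      Real.rpow_neg (by norm_num : (0:ℝ) ≤ 2)]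
    field_simp
  have h4 : (2:ℝ) ^ (-(1:ℝ) / p) * 2 ^ ((1:ℝ) / p) = 1 := by
    rw [← Real.rpow_add two_pos, neg_div, one_div, neg_add_cancel, Real.rpow_zero]
  have hinv : α * α⁻¹ = 1 := mul_inv_cancel₀ hα.ne'
  rw [hC, h1, h2]
  linear_combination ((D/α) ^ (p*(K:ℝ)) * D * S ^ (-(1/p)) * (2:ℝ) ^ ((1:ℝ)/p) * α * α⁻¹) * h3
    + ((D/α) ^ (p*(K:ℝ)) * D * S ^ (-(1/p)) * α * α⁻¹) * h4
    + ((D/α) ^ (p*(K:ℝ)) * D * S ^ (-(1/p))) * hinv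
end

section
/- Let p > 0, α > 0, 0 < D ≤ α, and let K ≥ 1 be an integer. Then ∫_ℝ [ (α/D)·e^{−|x|^p/(2D^p)}·e^{|x|^p/(2α^p)}·(D/α)^{p+1} ]^K · (c_p/α)·e^{−|x|^p/(2α^p)}·|x|^p dx = (2/p)·α^p·D^{p+1}·(D/α)^{pK}·(D^p + K·α^p − K·D^p)^{−(p+1)/p}. This is the p-th power distortion incurred on the event that all K channel outputs are zero (where the estimator outputs 0). -/
open MeasureTheory Real Set

/-- STATEMENT 10: the `p`-th power distortion incurred on the event that all `K` channel outputs
are zero (where the estimator outputs `0`):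
`∫ [ (α/D)·e^{−|x|^p/(2D^p)}·e^{|x|^p/(2α^p)}·(D/α)^{p+1} ]^K · (c_p/α)·e^{−|x|^p/(2α^p)}·|x|^p dx
  = (2/p)·α^p·D^{p+1}·(D/α)^{pK}·(D^p + K·α^p − K·D^p)^{−(p+1)/p}`. -/
theorem genGauss_distortion_all_zero (p α D : ℝ) (hp : 0 < p) (hα : 0 < α) (hD : 0 < D)
    (hDα : D ≤ α) (K : ℕ) (hK : 1 ≤ K) :
    ∫ x : ℝ,
        ((α / D) * Real.exp (-(|x| ^ p) / (2 * D ^ p)) * Real.exp ((|x| ^ p) / (2 * α ^ p)) *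
              (D / α) ^ (p + 1)) ^ K *
          ((genGaussConst p / α) * Real.exp (-(|x| ^ p) / (2 * α ^ p)) * |x| ^ p)
      = (2 / p) * α ^ p * D ^ (p + 1) * (D / α) ^ (p * K) *
          (D ^ p + K * α ^ p - K * D ^ p) ^ (-((p + 1) / p)) := by
  have hDp : (0:ℝ) < D ^ p := Real.rpow_pos_of_pos hD p
  have hαp : (0:ℝ) < α ^ p := Real.rpow_pos_of_pos hα p
  have hle : D ^ p ≤ α ^ p := Real.rpow_le_rpow hD.le hDα hp.le
  have hK1 : (1:ℝ) ≤ (K:ℝ) := by exact_mod_cast hK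
  set M : ℝ := D ^ p + K * α ^ p - K * D ^ p with hMdef
  have hM : 0 < M := by
    have : (K:ℝ) * D ^ p ≤ (K:ℝ) * α ^ p :=
      mul_le_mul_of_nonneg_left hle (by linarith)
    simp only [hMdef]; linarith
  set β : ℝ := M / (2 * D ^ p * α ^ p) with hβdef
  have hβ : 0 < β := div_pos hM (by positivity)
  have hda : (0:ℝ) < D / α := div_pos hD hα
  set C : ℝ := (D / α) ^ (p * (K:ℝ)) * (genGaussConst p / α) with hCdef
  have key : ∀ x : ℝ,
      ((α / D) * Real.exp (-(|x| ^ p) / (2 * D ^ p)) * Real.exp ((|x| ^ p) / (2 * α ^ p)) *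
            (D / α) ^ (p + 1)) ^ K *
        ((genGaussConst p / α) * Real.exp (-(|x| ^ p) / (2 * α ^ p)) * |x| ^ p)
      = C * (|x| ^ p * Real.exp (-β * |x| ^ p)) := by
    intro x
    set t : ℝ := |x| ^ p with htdef
    have h1 : (α / D) * Real.exp (-t / (2 * D ^ p)) * Real.exp (t / (2 * α ^ p)) *
        (D / α) ^ (p + 1)
        = (D / α) ^ p * Real.exp (-t / (2 * D ^ p) + t / (2 * α ^ p)) := by
      rw [Real.exp_add, Real.rpow_add hda, Real.rpow_one]
      have e1 : α / D * (D / α) = 1 := by field_simp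
      linear_combination ((D / α) ^ p * Real.exp (-t / (2 * D ^ p)) *
        Real.exp (t / (2 * α ^ p))) * e1
    rw [h1, mul_pow, ← Real.exp_nat_mul, ← Real.rpow_natCast ((D/α)^p) K,
      ← Real.rpow_mul hda.le]
    have h2 : Real.exp ((K:ℝ) * (-t / (2 * D ^ p) + t / (2 * α ^ p))) *
        Real.exp (-t / (2 * α ^ p)) = Real.exp (-β * t) := by
      rw [← Real.exp_add]
      congr 1
      rw [hβdef, hMdef]
      field_simp
      ring
    rw [hCdef, ← h2]
    ring
  simp_rw [key]
  rw [MeasureTheory.integral_const_mul]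
  rw [integral_comp_abs (f := fun t => t ^ p * Real.exp (-β * t ^ p))]
  rw [integral_rpow_mul_exp_neg_mul_rpow hp (by linarith) hβ]
  -- now pure algebra
  have hΓ : Real.Gamma ((p + 1) / p) = (1 / p) * Real.Gamma (1 / p) := by
    have : (p + 1) / p = 1 / p + 1 := by rw [add_div, div_self hp.ne', add_comm]
    rw [this, Real.Gamma_add_one (by positivity)]
  have hΓpos : 0 < Real.Gamma (1 / p) := Real.Gamma_pos_of_pos (by positivity)
  have hβpow : β ^ (-(p + 1) / p)
      = (2:ℝ) ^ ((p + 1) / p) * (D ^ p * α ^ p) ^ ((p + 1) / p) * M ^ (-((p + 1) / p)) := by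
    have h1 : β⁻¹ = 2 * (D ^ p * α ^ p) * M⁻¹ := by
      rw [hβdef]
      field_simp
    rw [show -(p + 1) / p = -((p + 1) / p) by ring, Real.rpow_neg hβ.le,
      ← Real.inv_rpow hβ.le, h1,
      Real.mul_rpow (by positivity) (by positivity),
      Real.mul_rpow (by norm_num) (by positivity),
      Real.inv_rpow hM.le, ← Real.rpow_neg hM.le]
  have hDαpow : (D ^ p * α ^ p) ^ ((p + 1) / p) = D ^ (p + 1) * α ^ (p + 1) := by
    rw [← Real.mul_rpow hD.le hα.le, ← Real.rpow_mul (by positivity : (0:ℝ) ≤ D * α),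
      show p * ((p + 1) / p) = p + 1 by field_simp, Real.mul_rpow hD.le hα.le]
  rw [hβpow, hΓ, hDαpow, hCdef]
  rw [genGaussConst]
  have hα1 : α ^ (p + 1) = α ^ p * α := by rw [Real.rpow_add hα, Real.rpow_one]
  rw [hα1]
  have h2pow : (0:ℝ) < (2:ℝ) ^ ((p + 1) / p) := by positivity
  field_simp
end

section
/- Let p > 0, α > 0 and K ≥ 1 an integer. For 0 < D ≤ α define p₀(D) = D·(D/α)^{pK}·(D^p + Kα^p − KD^p)^{−1/p} and F(D) = p₀(D)·α^p·D^p·(D^p + Kα^p − KD^p)^{−1} + (1 − p₀(D))·D^p. Then F is differentiable at D = α and F′(α) = p·K·α^{p−1}. Consequently, the slope of the operational rate-distortion function of the K-independent-encodings scheme at zero rate, lim computed as the ratio of the derivative of the rate K·log(α/D) to the derivative of the joint distortion (2/p)·F(D) at D = α, coincides with the slope of Shannon's rate-distortion function at zero rate, i.e., the ratio (−K/α)/( (2/p)·F′(α) ) equals the corresponding ratio (−K/α)/(2Kα^{p−1}) for Shannon's RDF. -/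
/-!
With `g(D) = D^p + Kα^p − KD^p`, write `F(D) = D^p + p₀(D)·(α^p D^p / g(D) − D^p)`. The gap
`α^p D^p / g(D) − D^p` vanishes at `D = α` (where `g(α) = α^p`), so in the product rule the
derivative of `p₀` is multiplied by zero and only `p₀(α) = 1` matters: `F′(α)` is `pα^{p−1}` plus
the derivative of the gap, `(K − 1)·pα^{p−1}`.
-/

/-- The probability `p₀(D) = D·(D/α)^{pK}·(D^p + Kα^p − KD^p)^{−1/p}` that all `K` outputs of
the parallel generalized-Gaussian test channels are zero. -/
noncomputable def probAllZero (p α : ℝ) (K : ℕ) (D : ℝ) : ℝ :=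
  D * (D / α) ^ (p * K) * (D ^ p + K * α ^ p - K * D ^ p) ^ (-(1 / p))

/-- `F(D) = p₀(D)·α^p·D^p·(D^p + Kα^p − KD^p)^{−1} + (1 − p₀(D))·D^p`; the joint `p`-th power
distortion of the select-non-zero estimator is `(2/p)·F(D)`. -/
noncomputable def distortionF (p α : ℝ) (K : ℕ) (D : ℝ) : ℝ :=
  probAllZero p α K D * (α ^ p * D ^ p * (D ^ p + K * α ^ p - K * D ^ p)⁻¹) +
    (1 - probAllZero p α K D) * D ^ p

open Real

theorem HasDerivAt.mul_of_right_eq_zero {𝕜 : Type*} [NontriviallyNormedField 𝕜] {f h : 𝕜 → 𝕜}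
    {f' h' x : 𝕜} (hf : HasDerivAt f f' x) (hh : HasDerivAt h h' x) (hx : h x = 0) :
    HasDerivAt (fun y => f y * h y) (f x * h') x :=
  (hf.mul hh).congr_deriv (by rw [hx, mul_zero, zero_add])

section

variable {p α : ℝ} {K : ℕ}

lemma hasDerivAt_probAllZero_denom {x : ℝ} (hx : 0 < x) :
    HasDerivAt (fun D : ℝ => D ^ p + K * α ^ p - K * D ^ p) ((1 - K) * (p * x ^ (p - 1))) x := by
  have hDp := hasDerivAt_rpow_const (p := p) (Or.inl hx.ne')
  exact ((hDp.add_const _).sub (hDp.const_mul (K : ℝ))).congr_deriv (by ring)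

lemma probAllZero_self (hp : p ≠ 0) (hα : 0 < α) : probAllZero p α K α = 1 := by
  rw [probAllZero, add_sub_cancel_right, div_self hα.ne', one_rpow, mul_one, ← rpow_mul hα.le,
    mul_neg, mul_one_div_cancel hp, rpow_neg_one, mul_inv_cancel₀ hα.ne']

lemma differentiableAt_probAllZero (hα : 0 < α) : DifferentiableAt ℝ (probAllZero p α K) α := by
  have hdenom : α ^ p + K * α ^ p - K * α ^ p ≠ 0 := by rw [add_sub_cancel_right]; positivity
  unfold probAllZero
  fun_prop (disch := first | exact hdenom | simp [hα.ne'])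

lemma distortionF_eq (D : ℝ) : distortionF p α K D =
    D ^ p + probAllZero p α K D * (α ^ p * D ^ p * (D ^ p + K * α ^ p - K * D ^ p)⁻¹ - D ^ p) := by
  rw [distortionF]; ring

lemma hasDerivAt_distortionGap (hα : 0 < α) :
    HasDerivAt (fun D : ℝ => α ^ p * D ^ p * (D ^ p + K * α ^ p - K * D ^ p)⁻¹ - D ^ p)
      ((K - 1) * (p * α ^ (p - 1))) α := by
  have hDp := hasDerivAt_rpow_const (p := p) (Or.inl hα.ne')
  have hinv := (hasDerivAt_probAllZero_denom (p := p) (α := α) (K := K) hα).inv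
    (by rw [add_sub_cancel_right]; positivity)
  refine (((hDp.const_mul (α ^ p)).mul hinv).sub hDp).congr_deriv ?_
  simp only [Pi.inv_apply, add_sub_cancel_right]
  field_simp
  ring

end

theorem genGauss_operational_slope_general (p α : ℝ) (hp : 0 < p) (hα : 0 < α) (K : ℕ) :
    HasDerivAt (distortionF p α K) (p * K * α ^ (p - 1)) α ∧
      (-(K : ℝ) / α) / ((2 / p) * (p * K * α ^ (p - 1)))
        = (-(K : ℝ) / α) / (2 * K * α ^ (p - 1)) := by
  refine ⟨?_, by congr 1; field_simp⟩
  have hgap_self : α ^ p * α ^ p * (α ^ p + K * α ^ p - K * α ^ p)⁻¹ - α ^ p = 0 := by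
    rw [add_sub_cancel_right, mul_inv_cancel_right₀ (rpow_pos_of_pos hα p).ne', sub_self]
  have hF := (hasDerivAt_rpow_const (p := p) (Or.inl hα.ne')).add
    ((differentiableAt_probAllZero (p := p) (K := K) hα).hasDerivAt.mul_of_right_eq_zero
      (hasDerivAt_distortionGap hα) hgap_self)
  rw [probAllZero_self hp.ne' hα] at hF
  rw [funext distortionF_eq]
  exact hF.congr_deriv (by ring)

/-- `F` is differentiable at `D = α` with `F′(α) = p·K·α^{p−1}`.  Consequently,
the slope of the operational rate-distortion function of the `K`-independent-encodings scheme
at zero rate — the ratio of the derivative of the rate `K·log(α/D)` to the derivative of the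
joint distortion `(2/p)·F(D)` at `D = α` — coincides with the slope of Shannon's RDF at zero
rate, i.e. `(−K/α)/((2/p)·F′(α)) = (−K/α)/(2Kα^{p−1})`. -/
theorem genGauss_operational_slope (p α : ℝ) (hp : 0 < p) (hα : 0 < α) (K : ℕ) (hK : 1 ≤ K) :
    HasDerivAt (distortionF p α K) (p * K * α ^ (p - 1)) α ∧
      (-(K : ℝ) / α) / ((2 / p) * (p * K * α ^ (p - 1)))
        = (-(K : ℝ) / α) / (2 * K * α ^ (p - 1)) :=
  genGauss_operational_slope_general p α hp hα K
end

section
/- Let σ² > 0, let K ≥ 1 be an integer, and let 0 < d₁ ≤ σ². Define D⁽⁰⁾ = σ² and, for i ≥ 1, d_i = D^{(i−1)}·d₁/σ² and D^{(i)} = d_i / (K − (K−1)·d_i/D^{(i−1)}). Then the per-round sum-rate (K/2)·log₂(D^{(i−1)}/d_i) = (K/2)·log₂(σ²/d₁) is the same in every round, and for every M ≥ 0 the joint distortion after M rounds is D^{(M)} = σ² · ( d₁ / (K·σ² − (K−1)·d₁) )^M. -/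
/-- multi-round unconditional incremental refinement of a Gaussian source of
variance `σ²` with `K` independent descriptions per round.  With `D⁽⁰⁾ = σ²`,
`d_i = D^{(i−1)}·d₁/σ²` and `D^{(i)} = d_i / (K − (K−1)·d_i/D^{(i−1)})` for `i ≥ 1`, the
per-round sum-rate `(K/2)·log₂(D^{(i−1)}/d_i) = (K/2)·log₂(σ²/d₁)` is the same in every round,
and for every `M ≥ 0` the joint distortion after `M` rounds is
`D^{(M)} = σ² · ( d₁ / (K·σ² − (K−1)·d₁) )^M`. -/
theorem gaussian_multiround_distortion (σ2 : ℝ) (hσ : 0 < σ2) (K : ℕ) (hK : 1 ≤ K)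
    (d1 : ℝ) (hd1 : 0 < d1) (hd1' : d1 ≤ σ2) (D d : ℕ → ℝ)
    (hD0 : D 0 = σ2)
    (hd : ∀ i, 1 ≤ i → d i = D (i - 1) * d1 / σ2)
    (hDi : ∀ i, 1 ≤ i → D i = d i / ((K : ℝ) - ((K : ℝ) - 1) * d i / D (i - 1))) :
    (∀ i, 1 ≤ i →
        ((K : ℝ) / 2) * Real.logb 2 (D (i - 1) / d i)
          = ((K : ℝ) / 2) * Real.logb 2 (σ2 / d1)) ∧
      ∀ M : ℕ, D M = σ2 * (d1 / ((K : ℝ) * σ2 - ((K : ℝ) - 1) * d1)) ^ M := by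
  have hK1 : (1:ℝ) ≤ (K:ℝ) := by exact_mod_cast hK
  have hc : 0 < (K:ℝ) * σ2 - ((K:ℝ) - 1) * d1 := by nlinarith
  set r : ℝ := d1 / ((K:ℝ) * σ2 - ((K:ℝ) - 1) * d1) with hr
  have hrpos : 0 < r := div_pos hd1 hc
  have hDM : ∀ M, D M = σ2 * r ^ M := by
    intro M
    induction M with
    | zero => simpa using hD0
    | succ n ih =>
      have hDn : 0 < D n := by rw [ih]; positivity
      have hdn : d (n+1) = D n * d1 / σ2 := by simpa using hd (n+1) (by omega)
      have h2 := hDi (n+1) (by omega)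
      simp only [Nat.add_sub_cancel] at h2
      have hden : (K:ℝ) - ((K:ℝ) - 1) * d (n+1) / D n
          = ((K:ℝ) * σ2 - ((K:ℝ) - 1) * d1) / σ2 := by
        rw [hdn]; field_simp
      rw [h2, hden, hdn, ih, hr]
      field_simp
      ring
  refine ⟨?_, hDM⟩
  intro i hi
  have hDn : 0 < D (i - 1) := by rw [hDM]; positivity
  have key : D (i - 1) / d i = σ2 / d1 := by
    rw [hd i hi]; field_simp
  rw [key]
end

section
/- Let σ² > 0, let K ≥ 1 be an integer, and let 0 < d ≤ σ². Then lim_{M → ∞} σ² · ( (d/σ²)^{1/M} / ( K − (K−1)·(d/σ²)^{1/M} ) )^M = σ²·(d/σ²)^K. Since the total sum-rate over M rounds is fixed at R_Σ = (K/2)·log₂(σ²/d), the right-hand side equals σ²·2^{−2R_Σ}, the distortion-rate function of the Gaussian source at rate R_Σ; hence the multi-round scheme of K independent encodings per round is asymptotically rate-distortion optimal as the number of rounds tends to infinity. -/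
/-!
Write `x = d/σ²` and `h t = t - log (K - (K - 1) eᵗ)`, so that `h 0 = 0` and `h' 0 = K`.
Once the denominator (which tends to `1`) is positive, the per-round ratio `x^{1/M} / (K - (K - 1) x^{1/M})`
equals `exp (h (log x / M))`, so its `M`-th power is `exp (M h (log x / M)) → exp (K log x) = x^K`.
The identity `x^K = 2^{-2 R_Σ}` just unwinds `R_Σ = (K/2) log₂ (1/x)`.
-/

open Filter Real Topology

theorem tendsto_nat_mul_apply_div_of_hasDerivAt {h : ℝ → ℝ} {a : ℝ} (h0 : h 0 = 0)
    (hh : HasDerivAt h a 0) (L : ℝ) :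
    Tendsto (fun n : ℕ => n * h (L / n)) atTop (𝓝 (a * L)) := by
  rcases eq_or_ne L 0 with rfl | hL
  · simp [h0]
  have hdiv : Tendsto (fun n : ℕ => L / n) atTop (𝓝[≠] 0) :=
    tendsto_nhdsWithin_iff.mpr ⟨tendsto_const_div_atTop_nhds_zero_nat L,
      eventually_ne_atTop 0 |>.mono fun n hn => div_ne_zero hL (Nat.cast_ne_zero.mpr hn)⟩
  have hslope := ((hasDerivAt_iff_tendsto_slope.mp hh).comp hdiv).const_mul L
  rw [mul_comm a L]
  refine hslope.congr' (eventually_ne_atTop 0 |>.mono fun n hn => ?_)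
  have hn' : (n : ℝ) ≠ 0 := Nat.cast_ne_zero.mpr hn
  simp only [Function.comp_apply, slope_def_field, h0, sub_zero]
  field_simp

theorem hasDerivAt_sub_log_sub_mul_exp (K : ℝ) :
    HasDerivAt (fun t => t - log (K - (K - 1) * exp t)) K 0 := by
  have hinner : HasDerivAt (fun t => K - (K - 1) * exp t) (-((K - 1) * exp 0)) 0 :=
    ((hasDerivAt_exp 0).const_mul (K - 1)).const_sub K
  refine ((hasDerivAt_id' 0).sub (hinner.log (by simp))).congr_deriv ?_
  simp

theorem tendsto_rpow_one_div_div_sub_mul_pow {x : ℝ} (hx : 0 < x) (K : ℝ) :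
    Tendsto (fun M : ℕ => (x ^ ((1 : ℝ) / M) / (K - (K - 1) * x ^ ((1 : ℝ) / M))) ^ M)
      atTop (𝓝 (x ^ K)) := by
  set h : ℝ → ℝ := fun t => t - log (K - (K - 1) * exp t)
  have hlim : Tendsto (fun M : ℕ => exp (M * h (log x / M))) atTop (𝓝 (x ^ K)) := by
    rw [rpow_def_of_pos hx, mul_comm]
    exact (continuous_exp.tendsto _).comp <|
      tendsto_nat_mul_apply_div_of_hasDerivAt (by simp) (hasDerivAt_sub_log_sub_mul_exp K) _
  have hroot : ∀ M : ℕ, x ^ ((1 : ℝ) / M) = exp (log x / M) := fun M => by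
    rw [rpow_def_of_pos hx, mul_one_div]
  have hden : ∀ᶠ M : ℕ in atTop, 0 < K - (K - 1) * exp (log x / M) := by
    have : Tendsto (fun M : ℕ => K - (K - 1) * exp (log x / M)) atTop (𝓝 (K - (K - 1) * exp 0)) :=
      tendsto_const_nhds.sub <| ((continuous_exp.tendsto 0).comp
        (tendsto_const_div_atTop_nhds_zero_nat (log x))).const_mul (K - 1)
    exact this.eventually_const_lt (by simp)
  refine hlim.congr' (hden.mono fun M hM => ?_)
  simp only [hroot, h]
  rw [exp_nat_mul, exp_sub, exp_log hM]

theorem rpow_neg_mul_logb {b y : ℝ} (hb : 0 < b) (hb1 : b ≠ 1) (hy : 0 < y) (k : ℝ) :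
    b ^ (-(k * logb b y)) = y⁻¹ ^ k := by
  rw [← neg_mul, mul_comm, rpow_mul hb.le, rpow_logb hb hb1 hy, rpow_neg hy.le, inv_rpow hy.le]

theorem gaussian_multiround_optimal_general (σ2 : ℝ) (hσ : 0 < σ2) (K : ℕ)
    (d : ℝ) (hd : 0 < d) :
    Filter.Tendsto
      (fun M : ℕ =>
        σ2 * ((d / σ2) ^ ((1 : ℝ) / M) /
          ((K : ℝ) - ((K : ℝ) - 1) * (d / σ2) ^ ((1 : ℝ) / M))) ^ M)
      Filter.atTop (nhds (σ2 * (d / σ2) ^ K)) ∧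
    σ2 * (d / σ2) ^ K
      = σ2 * (2 : ℝ) ^ (-(2 * (((K : ℝ) / 2) * Real.logb 2 (σ2 / d)))) := by
  constructor
  · simpa only [rpow_natCast] using
      (tendsto_rpow_one_div_div_sub_mul_pow (div_pos hd hσ) K).const_mul σ2
  · rw [show 2 * ((K : ℝ) / 2 * logb 2 (σ2 / d)) = K * logb 2 (σ2 / d) by ring,
      rpow_neg_mul_logb two_pos (by norm_num) (div_pos hσ hd), inv_div, rpow_natCast]

/-- asymptotic rate-distortion optimality of the multi-round Gaussian scheme with
`K` independent encodings per round.  For `0 < d ≤ σ²`,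
`lim_{M → ∞} σ²·( (d/σ²)^{1/M} / (K − (K−1)·(d/σ²)^{1/M}) )^M = σ²·(d/σ²)^K`, and since the
total sum-rate over `M` rounds is fixed at `R_Σ = (K/2)·log₂(σ²/d)`, the limit equals
`σ²·2^{−2R_Σ}`, the distortion-rate function of the Gaussian source at rate `R_Σ`. -/
theorem gaussian_multiround_optimal (σ2 : ℝ) (hσ : 0 < σ2) (K : ℕ) (hK : 1 ≤ K)
    (d : ℝ) (hd : 0 < d) (hd' : d ≤ σ2) :
    Filter.Tendsto
      (fun M : ℕ =>
        σ2 * ((d / σ2) ^ ((1 : ℝ) / M) /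
          ((K : ℝ) - ((K : ℝ) - 1) * (d / σ2) ^ ((1 : ℝ) / M))) ^ M)
      Filter.atTop (nhds (σ2 * (d / σ2) ^ K)) ∧
    σ2 * (d / σ2) ^ K
      = σ2 * (2 : ℝ) ^ (-(2 * (((K : ℝ) / 2) * Real.logb 2 (σ2 / d)))) :=
  gaussian_multiround_optimal_general σ2 hσ K d hd
end

section
/- Let λ₁ > 0, R ≥ 0 and let K ≥ 1 be an integer. Define recursively λ_{m+1} = λ_m + K·(D_m^{−1} − λ_m) where D_m = 2^{−R}/λ_m. Then for every M ≥ 0, λ_{M+1} = λ₁·(1 + K·(2^R − 1))^M, so the total distortion after M rounds is D̄_M = λ_{M+1}^{−1} = λ₁^{−1}·(1 + K(2^R − 1))^{−M}. In particular, for K = 1 one has D̄_M = λ₁^{−1}·2^{−MR}, which equals the distortion-rate function of the Exp(λ₁) source at total rate MR; hence for K = 1 the one-sided exponential source is successively refinable under the one-sided error distortion for every rate R and every number of rounds M. -/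
/-- multi-round coding of a one-sided exponential source.  With
`λ_{m+1} = λ_m + K·(D_m^{−1} − λ_m)` and `D_m = 2^{−R}/λ_m`, one has
`λ_{M+1} = λ₁·(1 + K·(2^R − 1))^M` for every `M ≥ 0`, so the total distortion after `M`
rounds is `D̄_M = λ_{M+1}^{−1} = λ₁^{−1}·(1 + K(2^R − 1))^{−M}`.  In particular, for `K = 1`,
`D̄_M = λ₁^{−1}·2^{−MR}`, which equals the distortion-rate function of the `Exp(λ₁)` source at
total rate `MR`; hence for `K = 1` the one-sided exponential source is successively refinable
under the one-sided error distortion for every rate `R` and every number of rounds `M`. -/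
theorem exp_source_multiround (lam : ℕ → ℝ) (hlam1 : 0 < lam 1) (R : ℝ) (hR : 0 ≤ R)
    (K : ℕ) (hK : 1 ≤ K)
    (hrec : ∀ m, 1 ≤ m →
      lam (m + 1) = lam m + (K : ℝ) * (((2 : ℝ) ^ (-R) / lam m)⁻¹ - lam m)) :
    (∀ M : ℕ, lam (M + 1) = lam 1 * (1 + (K : ℝ) * ((2 : ℝ) ^ R - 1)) ^ M) ∧
      (∀ M : ℕ, (lam (M + 1))⁻¹ = (lam 1)⁻¹ * (1 + (K : ℝ) * ((2 : ℝ) ^ R - 1))⁻¹ ^ M) ∧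
      (K = 1 → ∀ M : ℕ, (lam (M + 1))⁻¹ = (lam 1)⁻¹ * (2 : ℝ) ^ (-((M : ℝ) * R))) := by
  have h2 : (0:ℝ) < (2:ℝ) ^ (-R) := Real.rpow_pos_of_pos (by norm_num) _
  have hmain : ∀ M : ℕ, lam (M + 1) = lam 1 * (1 + (K : ℝ) * ((2 : ℝ) ^ R - 1)) ^ M := by
    intro M
    induction M with
    | zero => simp
    | succ n ih =>
      have h := hrec (n + 1) (by omega)
      have hinv : (((2 : ℝ) ^ (-R)) / lam (n+1))⁻¹ = lam (n+1) * (2:ℝ) ^ R := by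
        rw [inv_div, div_eq_iff (ne_of_gt h2), mul_assoc, ← Real.rpow_add (by norm_num)]
        simp
      rw [h, hinv, ih]
      ring
  have hpos : ∀ M : ℕ, (0:ℝ) < (1 + (K : ℝ) * ((2 : ℝ) ^ R - 1)) ^ M := by
    intro M
    apply pow_pos
    have h1 : (1:ℝ) ≤ (2:ℝ) ^ R := Real.one_le_rpow (by norm_num) hR
    have hK' : (0:ℝ) ≤ (K:ℝ) := Nat.cast_nonneg K
    nlinarith
  refine ⟨hmain, ?_, ?_⟩
  · intro M
    rw [hmain M, mul_inv, ← inv_pow]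
  · intro hK1 M
    rw [hmain M, hK1]
    have heq : 1 + ((1:ℕ):ℝ) * ((2:ℝ) ^ R - 1) = (2:ℝ) ^ R := by push_cast; ring
    rw [heq, mul_inv]
    congr 1
    rw [← Real.rpow_natCast ((2:ℝ) ^ R) M, ← Real.rpow_mul (by norm_num),
        ← Real.rpow_neg (by norm_num), mul_comm]
end

section
/- Let K ≥ 1 be an integer and R′ > 0. Then lim_{M → ∞} ( 1 + K·( 2^{R′/(K·M)} − 1 ) )^M = 2^{R′}. Consequently, in multi-round coding of a one-sided exponential source with K independent encodings per round and total sum-rate R′ split evenly over M rounds, the residual parameter λ_{M+1} = λ₁·(1 + K(2^{R′/(KM)} − 1))^M tends to λ₁·2^{R′} as M → ∞, so the final distortion tends to λ₁^{−1}·2^{−R′}, the distortion-rate function at total rate R′; i.e., the scheme is asymptotically rate-distortion optimal as the number of rounds tends to infinity. -/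
open Filter Real Topology

/-! Each round multiplies the parameter by `1 + K (2^{R'/(KM)} - 1) = 1 + (R' log 2)/M + o(1/M)`,
since `log 2` is the derivative of `t ↦ 2^t` at `0`; hence the `M`-th power tends to
`exp (R' log 2) = 2^{R'}`, as in `(1 + t/M)^M → exp t`. -/

theorem tendsto_mul_rpow_div_sub_one {b : ℝ} (hb : 0 < b) (c : ℝ) :
    Tendsto (fun x : ℝ => x * (b ^ (c / x) - 1)) atTop (𝓝 (log b * c)) := by
  rcases eq_or_ne c 0 with rfl | hc
  · simp
  have hslope : Tendsto (fun t : ℝ => t⁻¹ * (b ^ t - 1)) (𝓝[≠] 0) (𝓝 (log b)) := by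
    simpa using (hasStrictDerivAt_const_rpow hb 0).hasDerivAt.tendsto_slope_zero
  have hdiv : Tendsto (fun x : ℝ => c / x) atTop (𝓝[≠] 0) :=
    tendsto_nhdsWithin_iff.mpr ⟨tendsto_const_nhds.div_atTop tendsto_id,
      (eventually_gt_atTop 0).mono fun x hx => div_ne_zero hc hx.ne'⟩
  refine ((hslope.comp hdiv).mul_const c).congr' ?_
  filter_upwards [eventually_gt_atTop 0] with x hx
  simp only [Function.comp_apply]
  field_simp

theorem tendsto_one_add_mul_rpow_div_sub_one_pow {b : ℝ} (hb : 0 < b) {K : ℝ} (hK : 0 < K)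
    (c : ℝ) :
    Tendsto (fun n : ℕ => (1 + K * (b ^ (c / (K * n)) - 1)) ^ n) atTop (𝓝 (b ^ c)) := by
  have hrate : Tendsto (fun n : ℕ => (n : ℝ) * (K * (b ^ (c / (K * n)) - 1))) atTop
      (𝓝 (log b * c)) :=
    ((tendsto_mul_rpow_div_sub_one hb c).comp
      (tendsto_natCast_atTop_atTop.const_mul_atTop hK)).congr fun n => by
        simp only [Function.comp_apply]; ring
  simpa [rpow_def_of_pos hb] using tendsto_one_add_pow_exp_of_tendsto hrate

theorem exp_source_multiround_optimal_general (K : ℕ) (hK : 1 ≤ K) (R' : ℝ)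
    (lam1 : ℝ) :
    Filter.Tendsto
      (fun M : ℕ => (1 + (K : ℝ) * ((2 : ℝ) ^ (R' / ((K : ℝ) * M)) - 1)) ^ M)
      Filter.atTop (nhds ((2 : ℝ) ^ R')) ∧
    Filter.Tendsto
      (fun M : ℕ => (lam1 * (1 + (K : ℝ) * ((2 : ℝ) ^ (R' / ((K : ℝ) * M)) - 1)) ^ M)⁻¹)
      Filter.atTop (nhds (lam1⁻¹ * (2 : ℝ) ^ (-R'))) := by
  have hparam := tendsto_one_add_mul_rpow_div_sub_one_pow two_pos
    (show (0 : ℝ) < K by exact_mod_cast hK) R'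
  refine ⟨hparam, ?_⟩
  simp only [mul_inv, rpow_neg zero_le_two]
  exact (hparam.inv₀ (rpow_pos_of_pos two_pos R').ne').const_mul lam1⁻¹

/-- `lim_{M → ∞} (1 + K·(2^{R′/(K·M)} − 1))^M = 2^{R′}`.  Consequently, in
multi-round coding of a one-sided exponential source with `K` independent encodings per round
and total sum-rate `R′` split evenly over `M` rounds, the residual parameter
`λ_{M+1} = λ₁·(1 + K(2^{R′/(KM)} − 1))^M` tends to `λ₁·2^{R′}` as `M → ∞`, so the final
distortion tends to `λ₁^{−1}·2^{−R′}`, the distortion-rate function at total rate `R′`: the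
scheme is asymptotically rate-distortion optimal as the number of rounds tends to infinity. -/
theorem exp_source_multiround_optimal (K : ℕ) (hK : 1 ≤ K) (R' : ℝ) (hR : 0 < R')
    (lam1 : ℝ) (hlam : 0 < lam1) :
    Filter.Tendsto
      (fun M : ℕ => (1 + (K : ℝ) * ((2 : ℝ) ^ (R' / ((K : ℝ) * M)) - 1)) ^ M)
      Filter.atTop (nhds ((2 : ℝ) ^ R')) ∧
    Filter.Tendsto
      (fun M : ℕ => (lam1 * (1 + (K : ℝ) * ((2 : ℝ) ^ (R' / ((K : ℝ) * M)) - 1)) ^ M)⁻¹)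
      Filter.atTop (nhds (lam1⁻¹ * (2 : ℝ) ^ (-R'))) :=
  exp_source_multiround_optimal_general K hK R' lam1
end

section
/- Let 𝒳, 𝒴, 𝒵 be nonempty finite sets, let p_X, p_Y, p_Z be strictly positive probability mass functions on them, and let ψ_Y : 𝒴 × 𝒳 → ℝ, ψ_Z : 𝒵 × 𝒳 → ℝ satisfy ∑_y p_Y(y)ψ_Y(y,x) = 0 and ∑_z p_Z(z)ψ_Z(z,x) = 0 for every x. For ε small enough that all factors below are positive, define the joint pmf q_ε(x,y,z) = p_X(x)·p_Y(y)(1 + ε·ψ_Y(y,x))·p_Z(z)(1 + ε·ψ_Z(z,x)), and define, via the marginals of q_ε, the finite sums I_ε(X;Y) = ∑_{x,y} q_ε(x,y)·log( q_ε(x,y) / (p_X(x)·q_ε(y)) ), I_ε(X;Z) analogously, and I_ε(X;Y,Z) = ∑_{x,y,z} q_ε(x,y,z)·log( q_ε(x,y,z) / (p_X(x)·q_ε(y,z)) ). Then lim_{ε → 0} ( I_ε(X;Y,Z) − I_ε(X;Y) − I_ε(X;Z) ) / ε² = 0. -/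
open Finset

variable {X Y Z : Type*} [Fintype X] [Fintype Y] [Fintype Z]

/-- The joint pmf `q_ε(x,y,z) = p_X(x)·p_Y(y)(1 + ε·ψ_Y(y,x))·p_Z(z)(1 + ε·ψ_Z(z,x))` of two
very noisy channels `X → Y` and `X → Z` that are conditionally independent given `X`. -/
def vncJoint (pX : X → ℝ) (pY : Y → ℝ) (pZ : Z → ℝ) (ψY : Y → X → ℝ) (ψZ : Z → X → ℝ)
    (ε : ℝ) (x : X) (y : Y) (z : Z) : ℝ :=
  pX x * (pY y * (1 + ε * ψY y x)) * (pZ z * (1 + ε * ψZ z x))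

/-- `I_ε(X;Y)`, computed from the marginals of `q_ε`. -/
noncomputable def vncIXY (pX : X → ℝ) (pY : Y → ℝ) (pZ : Z → ℝ) (ψY : Y → X → ℝ)
    (ψZ : Z → X → ℝ) (ε : ℝ) : ℝ :=
  ∑ x, ∑ y, (∑ z, vncJoint pX pY pZ ψY ψZ ε x y z) *
    Real.log ((∑ z, vncJoint pX pY pZ ψY ψZ ε x y z) /
      (pX x * ∑ x', ∑ z, vncJoint pX pY pZ ψY ψZ ε x' y z))

/-- `I_ε(X;Z)`, computed from the marginals of `q_ε`. -/
noncomputable def vncIXZ (pX : X → ℝ) (pY : Y → ℝ) (pZ : Z → ℝ) (ψY : Y → X → ℝ)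
    (ψZ : Z → X → ℝ) (ε : ℝ) : ℝ :=
  ∑ x, ∑ z, (∑ y, vncJoint pX pY pZ ψY ψZ ε x y z) *
    Real.log ((∑ y, vncJoint pX pY pZ ψY ψZ ε x y z) /
      (pX x * ∑ x', ∑ y, vncJoint pX pY pZ ψY ψZ ε x' y z))

/-- `I_ε(X;Y,Z)`, computed from the marginals of `q_ε`. -/
noncomputable def vncIXYZ (pX : X → ℝ) (pY : Y → ℝ) (pZ : Z → ℝ) (ψY : Y → X → ℝ)
    (ψZ : Z → X → ℝ) (ε : ℝ) : ℝ :=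
  ∑ x, ∑ y, ∑ z, vncJoint pX pY pZ ψY ψZ ε x y z *
    Real.log (vncJoint pX pY pZ ψY ψZ ε x y z /
      (pX x * ∑ x', vncJoint pX pY pZ ψY ψZ ε x' y z))

/-!
Write `I(X;W) = H(W) - H(W|X)`, with `H` the `negMulLog`-entropy of the density of `W` with
respect to its reference pmf. Conditional independence of `Y` and `Z` given `X` makes
`H(Y,Z|X) = H(Y|X) + H(Z|X)`, so the defect `I(X;Y,Z) - I(X;Y) - I(X;Z)` is `-I(Y;Z)`: a weighted
sum of `negMulLog q(y,z) - negMulLog (q(y) q(z))` over output densities. Both densities are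
`1 + ε (A y + B z) + ε² c` with `A`, `B` the `pX`-averages of `ψY`, `ψZ`, and second-order
coefficient `c = E[ψY ψZ]` resp. `c = A y * B z`. Since `negMulLog (1 + t) = -t - t²/2 + o(t²)`,
the defect over `ε²` tends to the weighted sum of `A y * B z - E[ψY ψZ]`, which vanishes because
`ψY` and `ψZ` are centred.
-/

open Finset Filter Topology Real

theorem tendsto_negMulLog_one_add_add_div_sq :
    Tendsto (fun t : ℝ => (negMulLog (1 + t) + t) / t ^ 2) (𝓝[≠] 0) (𝓝 (-1 / 2)) := by
  have hnear : ∀ᶠ t : ℝ in 𝓝[≠] 0, 1 + t ≠ 0 :=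
    nhdsWithin_le_nhds <| (continuous_const.add continuous_id).continuousAt.eventually_ne
      (by norm_num : (1 : ℝ) + 0 ≠ 0)
  refine HasDerivAt.lhopital_zero_nhdsNE (f' := fun t => -log (1 + t)) (g' := fun t => 2 * t)
    ?_ ?_ ?_ ?_ ?_ ?_
  · filter_upwards [hnear] with t ht
    exact (((hasDerivAt_negMulLog ht).comp t ((hasDerivAt_id t).const_add 1)).add
      (hasDerivAt_id t)).congr_deriv (by simp)
  · exact .of_forall fun t => by simpa using hasDerivAt_pow 2 t
  · filter_upwards [self_mem_nhdsWithin] with t ht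
    simpa using ht
  · exact tendsto_nhdsWithin_of_tendsto_nhds <|
      (Continuous.tendsto' (by fun_prop) _ _ (by simp))
  · exact tendsto_nhdsWithin_of_tendsto_nhds <|
      (Continuous.tendsto' (by fun_prop) _ _ (by simp))
  · have hslope : Tendsto (fun t : ℝ => t⁻¹ * log (1 + t)) (𝓝[≠] 0) (𝓝 1) := by
      simpa using ((hasDerivAt_id (0:ℝ)).const_add 1).log (by norm_num) |>.tendsto_slope_zero
    convert (hslope.const_mul (-1 / 2)).congr' ?_ using 2
    · norm_num
    filter_upwards [self_mem_nhdsWithin] with t ht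
    field_simp

noncomputable def negMulLogQuadCoeff : ℝ → ℝ :=
  Function.update (fun t => (negMulLog (1 + t) + t) / t ^ 2) 0 (-1 / 2)

theorem continuousAt_negMulLogQuadCoeff : ContinuousAt negMulLogQuadCoeff 0 :=
  continuousAt_update_same.2 tendsto_negMulLog_one_add_add_div_sq

theorem negMulLog_one_add (t : ℝ) : negMulLog (1 + t) = t ^ 2 * negMulLogQuadCoeff t - t := by
  rcases eq_or_ne t 0 with rfl | ht
  · simp
  · rw [negMulLogQuadCoeff, Function.update_of_ne ht]
    field_simp
    ring

theorem tendsto_negMulLog_one_add_quadratic_div_sq (d c : ℝ) :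
    Tendsto (fun ε : ℝ => (negMulLog (1 + (ε * d + ε ^ 2 * c)) + ε * d) / ε ^ 2) (𝓝[≠] 0)
      (𝓝 (-d ^ 2 / 2 - c)) := by
  have hcoeff : Tendsto (fun ε : ℝ => negMulLogQuadCoeff (ε * d + ε ^ 2 * c)) (𝓝 0)
      (𝓝 (negMulLogQuadCoeff 0)) :=
    continuousAt_negMulLogQuadCoeff.tendsto.comp (Continuous.tendsto' (by fun_prop) _ _ (by simp))
  have hsq : Tendsto (fun ε : ℝ => (d + ε * c) ^ 2) (𝓝 0) (𝓝 (d ^ 2)) :=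
    Continuous.tendsto' (by fun_prop) _ _ (by simp)
  have hlim : Tendsto (fun ε : ℝ => (d + ε * c) ^ 2 * negMulLogQuadCoeff (ε * d + ε ^ 2 * c) - c)
      (𝓝 0) (𝓝 (-d ^ 2 / 2 - c)) := by
    convert (hsq.mul hcoeff).sub_const c using 2
    simp only [negMulLogQuadCoeff, Function.update_self]
    ring
  refine (hlim.mono_left nhdsWithin_le_nhds).congr' ?_
  filter_upwards [self_mem_nhdsWithin] with ε (hε : ε ≠ 0)
  rw [negMulLog_one_add]
  field_simp
  ring

theorem tendsto_sum_negMulLog_sub_div_sq {ι : Type*} [Fintype ι] (μ d c c' : ι → ℝ) :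
    Tendsto (fun ε : ℝ => (∑ i, μ i * (negMulLog (1 + (ε * d i + ε ^ 2 * c i)) -
        negMulLog (1 + (ε * d i + ε ^ 2 * c' i)))) / ε ^ 2) (𝓝[≠] 0)
      (𝓝 (∑ i, μ i * (c' i - c i))) := by
  have hterm (i : ι) := ((tendsto_negMulLog_one_add_quadratic_div_sq (d i) (c i)).sub
    (tendsto_negMulLog_one_add_quadratic_div_sq (d i) (c' i))).const_mul (μ i)
  convert tendsto_finsetSum univ fun i _ => hterm i using 2 with ε
  · rw [sum_div]
    exact sum_congr rfl fun i _ => by ring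
  · exact sum_congr rfl fun i _ => by ring

section MutualInformation

variable {W : Type*} [Fintype W]

/-- Mutual information of the joint pmf `pX x * pW w * g w x`, where `g w x` is the density of
the channel output at `x` with respect to `pW`. -/
noncomputable def mutualInfoOfDensity (pX : X → ℝ) (pW : W → ℝ) (g : W → X → ℝ) : ℝ :=
  ∑ x, ∑ w, pX x * pW w * g w x *
    log (pX x * pW w * g w x / (pX x * ∑ x', pX x' * pW w * g w x'))

theorem mul_log_mul_div_mul_left (a u : ℝ) {v : ℝ} (hv : v ≠ 0) :
    a * u * log (a * u / (a * v)) = a * u * (log u - log v) := by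
  rcases eq_or_ne a 0 with rfl | ha
  · simp
  rcases eq_or_ne u 0 with rfl | hu
  · simp
  rw [mul_div_mul_left _ _ ha, log_div hu hv]

theorem mutualInfoOfDensity_eq (pX : X → ℝ) (pW : W → ℝ) (g : W → X → ℝ)
    (hm : ∀ w, ∑ x, pX x * g w x ≠ 0) :
    mutualInfoOfDensity pX pW g =
      ∑ w, pW w * negMulLog (∑ x, pX x * g w x) - ∑ x, pX x * ∑ w, pW w * negMulLog (g w x) := by
  have hterm (x : X) (w : W) :
      pX x * pW w * g w x * log (pX x * pW w * g w x / (pX x * ∑ x', pX x' * pW w * g w x')) =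
        pX x * (pW w * g w x * log (g w x)) -
          pX x * g w x * (pW w * log (∑ x', pX x' * g w x')) := by
    have hmarg : pX x * ∑ x', pX x' * pW w * g w x' = pX x * pW w * ∑ x', pX x' * g w x' := by
      simp only [mul_sum]
      exact sum_congr rfl fun x' _ => by ring
    rw [hmarg, mul_log_mul_div_mul_left _ _ (hm w)]
    ring
  have hcond : ∑ x, ∑ w, pX x * (pW w * g w x * log (g w x)) =
      -∑ x, pX x * ∑ w, pW w * negMulLog (g w x) := by
    simp only [negMulLog, mul_sum, ← sum_neg_distrib]
    exact sum_congr rfl fun x _ => sum_congr rfl fun w _ => by ring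
  have hmarg : ∑ x, ∑ w, pX x * g w x * (pW w * log (∑ x', pX x' * g w x')) =
      -∑ w, pW w * negMulLog (∑ x, pX x * g w x) := by
    rw [sum_comm, ← sum_neg_distrib]
    exact sum_congr rfl fun w _ => by rw [← sum_mul, negMulLog]; ring
  simp only [mutualInfoOfDensity, hterm, sum_sub_distrib, hcond, hmarg]
  ring

theorem sum_prod_mul_negMulLog_mul (p : Y → ℝ) (q : Z → ℝ) (u : Y → ℝ) (v : Z → ℝ)
    (hpu : ∑ y, p y * u y = 1) (hqv : ∑ z, q z * v z = 1) :
    ∑ w : Y × Z, p w.1 * q w.2 * negMulLog (u w.1 * v w.2) =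
      ∑ y, p y * negMulLog (u y) + ∑ z, q z * negMulLog (v z) := by
  have hterm (y : Y) (z : Z) : p y * q z * negMulLog (u y * v z) =
      p y * negMulLog (u y) * (q z * v z) + p y * u y * (q z * negMulLog (v z)) := by
    rw [negMulLog_mul]
    ring
  simp only [Fintype.sum_prod_type, hterm, sum_add_distrib, ← mul_sum, ← sum_mul, hqv, hpu,
    mul_one, one_mul]

end MutualInformation

theorem sum_mul_one_add_mul (p f : X → ℝ) (hp : ∑ x, p x = 1) (ε : ℝ) :
    ∑ x, p x * (1 + ε * f x) = 1 + ε * ∑ x, p x * f x := by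
  simp only [mul_add, mul_one, sum_add_distrib, hp, mul_sum]
  exact congrArg _ (sum_congr rfl fun x _ => by ring)

theorem sum_mul_one_add_mul_mul_one_add_mul (p f g : X → ℝ) (hp : ∑ x, p x = 1) (ε : ℝ) :
    ∑ x, p x * ((1 + ε * f x) * (1 + ε * g x)) =
      1 + (ε * (∑ x, p x * f x + ∑ x, p x * g x) + ε ^ 2 * ∑ x, p x * (f x * g x)) := by
  have hterm (x : X) : p x * ((1 + ε * f x) * (1 + ε * g x)) =
      p x + (ε * (p x * f x + p x * g x) + ε ^ 2 * (p x * (f x * g x))) := by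
    ring
  simp only [hterm, sum_add_distrib, hp, ← mul_sum]

theorem one_add_mul_mul_one_add_mul (ε a b : ℝ) :
    (1 + ε * a) * (1 + ε * b) = 1 + (ε * (a + b) + ε ^ 2 * (a * b)) := by
  ring

theorem sum_mul_sum_mul_eq_zero (p : Y → ℝ) (q : X → ℝ) (ψ : Y → X → ℝ)
    (hψ : ∀ x, ∑ y, p y * ψ y x = 0) : ∑ y, p y * ∑ x, q x * ψ y x = 0 := by
  simp only [mul_sum]
  rw [sum_comm]
  refine sum_eq_zero fun x _ => ?_
  rw [← mul_zero (q x), ← hψ x, mul_sum]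
  exact sum_congr rfl fun y _ => by ring

section VeryNoisyChannels

variable (pX : X → ℝ) (pY : Y → ℝ) (pZ : Z → ℝ) (ψY : Y → X → ℝ) (ψZ : Z → X → ℝ)

theorem vncIXY_eq (hpZ1 : ∑ z, pZ z = 1) (hψZ : ∀ x, ∑ z, pZ z * ψZ z x = 0) (ε : ℝ) :
    vncIXY pX pY pZ ψY ψZ ε = mutualInfoOfDensity pX pY (fun y x => 1 + ε * ψY y x) := by
  have hmarg (x : X) (y : Y) :
      ∑ z, vncJoint pX pY pZ ψY ψZ ε x y z = pX x * pY y * (1 + ε * ψY y x) := by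
    simp only [vncJoint, ← mul_sum, sum_mul_one_add_mul pZ (ψZ · x) hpZ1, hψZ, mul_zero,
      add_zero]
    ring
  simp only [vncIXY, hmarg, mutualInfoOfDensity]

theorem vncIXZ_eq (hpY1 : ∑ y, pY y = 1) (hψY : ∀ x, ∑ y, pY y * ψY y x = 0) (ε : ℝ) :
    vncIXZ pX pY pZ ψY ψZ ε = mutualInfoOfDensity pX pZ (fun z x => 1 + ε * ψZ z x) := by
  have hjoint (x : X) (y : Y) (z : Z) : vncJoint pX pY pZ ψY ψZ ε x y z =
      pX x * pZ z * (1 + ε * ψZ z x) * (pY y * (1 + ε * ψY y x)) := by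
    rw [vncJoint]
    ring
  have hmarg (x : X) (z : Z) :
      ∑ y, vncJoint pX pY pZ ψY ψZ ε x y z = pX x * pZ z * (1 + ε * ψZ z x) := by
    simp only [hjoint, ← mul_sum, sum_mul_one_add_mul pY (ψY · x) hpY1, hψY, mul_zero, add_zero,
      mul_one]
  simp only [vncIXZ, hmarg, mutualInfoOfDensity]

theorem vncIXYZ_eq (ε : ℝ) :
    vncIXYZ pX pY pZ ψY ψZ ε = mutualInfoOfDensity pX (fun w : Y × Z => pY w.1 * pZ w.2)
      (fun w x => (1 + ε * ψY w.1 x) * (1 + ε * ψZ w.2 x)) := by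
  have hjoint (x : X) (y : Y) (z : Z) : vncJoint pX pY pZ ψY ψZ ε x y z =
      pX x * (pY y * pZ z) * ((1 + ε * ψY y x) * (1 + ε * ψZ z x)) := by
    rw [vncJoint]
    ring
  simp only [vncIXYZ, hjoint, mutualInfoOfDensity, Fintype.sum_prod_type]

theorem vnc_mutualInfo_defect_eq (hpX1 : ∑ x, pX x = 1) (hpY1 : ∑ y, pY y = 1)
    (hpZ1 : ∑ z, pZ z = 1) (hψY : ∀ x, ∑ y, pY y * ψY y x = 0)
    (hψZ : ∀ x, ∑ z, pZ z * ψZ z x = 0) (ε : ℝ)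
    (hmY : ∀ y, ∑ x, pX x * (1 + ε * ψY y x) ≠ 0) (hmZ : ∀ z, ∑ x, pX x * (1 + ε * ψZ z x) ≠ 0)
    (hmYZ : ∀ w : Y × Z, ∑ x, pX x * ((1 + ε * ψY w.1 x) * (1 + ε * ψZ w.2 x)) ≠ 0) :
    vncIXYZ pX pY pZ ψY ψZ ε - vncIXY pX pY pZ ψY ψZ ε - vncIXZ pX pY pZ ψY ψZ ε =
      ∑ w : Y × Z, pY w.1 * pZ w.2 *
        (negMulLog (∑ x, pX x * ((1 + ε * ψY w.1 x) * (1 + ε * ψZ w.2 x))) -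
          negMulLog ((∑ x, pX x * (1 + ε * ψY w.1 x)) * ∑ x, pX x * (1 + ε * ψZ w.2 x))) := by
  have hcondY (x : X) : ∑ y, pY y * (1 + ε * ψY y x) = 1 := by
    rw [sum_mul_one_add_mul pY (ψY · x) hpY1, hψY, mul_zero, add_zero]
  have hcondZ (x : X) : ∑ z, pZ z * (1 + ε * ψZ z x) = 1 := by
    rw [sum_mul_one_add_mul pZ (ψZ · x) hpZ1, hψZ, mul_zero, add_zero]
  have hmargY : ∑ y, pY y * ∑ x, pX x * (1 + ε * ψY y x) = 1 := by
    simp only [sum_mul_one_add_mul _ _ hpX1, sum_mul_one_add_mul _ _ hpY1,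
      sum_mul_sum_mul_eq_zero pY pX ψY hψY, mul_zero, add_zero]
  have hmargZ : ∑ z, pZ z * ∑ x, pX x * (1 + ε * ψZ z x) = 1 := by
    simp only [sum_mul_one_add_mul _ _ hpX1, sum_mul_one_add_mul _ _ hpZ1,
      sum_mul_sum_mul_eq_zero pZ pX ψZ hψZ, mul_zero, add_zero]
  have hcond : ∑ x, pX x * ∑ w : Y × Z, pY w.1 * pZ w.2 *
        negMulLog ((1 + ε * ψY w.1 x) * (1 + ε * ψZ w.2 x)) =
      ∑ x, pX x * ∑ y, pY y * negMulLog (1 + ε * ψY y x) +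
        ∑ x, pX x * ∑ z, pZ z * negMulLog (1 + ε * ψZ z x) := by
    rw [← sum_add_distrib]
    exact sum_congr rfl fun x _ => by
      rw [sum_prod_mul_negMulLog_mul pY pZ _ _ (hcondY x) (hcondZ x), mul_add]
  have hmarg := sum_prod_mul_negMulLog_mul pY pZ _ _ hmargY hmargZ
  rw [vncIXYZ_eq, vncIXY_eq pX pY pZ ψY ψZ hpZ1 hψZ, vncIXZ_eq pX pY pZ ψY ψZ hpY1 hψY,
    mutualInfoOfDensity_eq _ _ _ hmYZ, mutualInfoOfDensity_eq _ _ _ hmY,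
    mutualInfoOfDensity_eq _ _ _ hmZ, hcond]
  simp only [mul_sub, sum_sub_distrib]
  linear_combination hmarg

theorem vnc_crossMoment_eq_zero (hψY : ∀ x, ∑ y, pY y * ψY y x = 0)
    (hψZ : ∀ x, ∑ z, pZ z * ψZ z x = 0) :
    ∑ w : Y × Z, pY w.1 * pZ w.2 * ((∑ x, pX x * ψY w.1 x) * (∑ x, pX x * ψZ w.2 x) -
      ∑ x, pX x * (ψY w.1 x * ψZ w.2 x)) = 0 := by
  have hmeans : ∑ w : Y × Z, pY w.1 * pZ w.2 * ((∑ x, pX x * ψY w.1 x) * ∑ x, pX x * ψZ w.2 x) =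
      (∑ y, pY y * ∑ x, pX x * ψY y x) * ∑ z, pZ z * ∑ x, pX x * ψZ z x := by
    rw [Fintype.sum_prod_type, sum_mul_sum]
    exact sum_congr rfl fun _ _ => sum_congr rfl fun _ _ => by ring
  have hcross (y : Y) : ∑ z, pY y * pZ z * ∑ x, pX x * (ψY y x * ψZ z x) = 0 := by
    calc ∑ z, pY y * pZ z * ∑ x, pX x * (ψY y x * ψZ z x)
        = ∑ x, pY y * pX x * ψY y x * ∑ z, pZ z * ψZ z x := by
          simp only [mul_sum]
          rw [sum_comm]
          exact sum_congr rfl fun _ _ => sum_congr rfl fun _ _ => by ring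
      _ = 0 := by simp [hψZ]
  simp only [mul_sub, sum_sub_distrib, hmeans, sum_mul_sum_mul_eq_zero pY pX ψY hψY, zero_mul]
  rw [Fintype.sum_prod_type, sum_eq_zero fun y _ => hcross y, sub_zero]

end VeryNoisyChannels

theorem very_noisy_channels_mutual_info_general (pX : X → ℝ) (pY : Y → ℝ) (pZ : Z → ℝ)
    (hpX1 : ∑ x, pX x = 1) (hpY1 : ∑ y, pY y = 1) (hpZ1 : ∑ z, pZ z = 1)
    (ψY : Y → X → ℝ) (ψZ : Z → X → ℝ)
    (hψY : ∀ x, ∑ y, pY y * ψY y x = 0) (hψZ : ∀ x, ∑ z, pZ z * ψZ z x = 0) :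
    Filter.Tendsto
      (fun ε : ℝ =>
        (vncIXYZ pX pY pZ ψY ψZ ε - vncIXY pX pY pZ ψY ψZ ε - vncIXZ pX pY pZ ψY ψZ ε) / ε ^ 2)
      (nhdsWithin 0 {(0 : ℝ)}ᶜ) (nhds 0) := by
  have hlim := tendsto_sum_negMulLog_sub_div_sq (fun w : Y × Z => pY w.1 * pZ w.2)
    (fun w => ∑ x, pX x * ψY w.1 x + ∑ x, pX x * ψZ w.2 x)
    (fun w => ∑ x, pX x * (ψY w.1 x * ψZ w.2 x))
    (fun w => (∑ x, pX x * ψY w.1 x) * ∑ x, pX x * ψZ w.2 x)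
  rw [vnc_crossMoment_eq_zero pX pY pZ ψY ψZ hψY hψZ] at hlim
  have hmarg_ne : ∀ᶠ ε in 𝓝 (0 : ℝ), (∀ y, ∑ x, pX x * (1 + ε * ψY y x) ≠ 0) ∧
      (∀ z, ∑ x, pX x * (1 + ε * ψZ z x) ≠ 0) ∧
      ∀ w : Y × Z, ∑ x, pX x * ((1 + ε * ψY w.1 x) * (1 + ε * ψZ w.2 x)) ≠ 0 := by
    refine (eventually_all.2 fun y => ?_).and
      ((eventually_all.2 fun z => ?_).and (eventually_all.2 fun w => ?_)) <;>
    exact ContinuousAt.eventually_ne (by fun_prop) (by simp [hpX1])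
  refine hlim.congr' ?_
  filter_upwards [nhdsWithin_le_nhds hmarg_ne] with ε ⟨hmY, hmZ, hmYZ⟩
  rw [vnc_mutualInfo_defect_eq pX pY pZ ψY ψZ hpX1 hpY1 hpZ1 hψY hψZ ε hmY hmZ hmYZ]
  -- the marginal sums must be evaluated before the products inside them are expanded
  simp only [sum_mul_one_add_mul_mul_one_add_mul _ _ _ hpX1, sum_mul_one_add_mul _ _ hpX1]
  simp only [one_add_mul_mul_one_add_mul]

/-- STATEMENT 17: for two very noisy channels `X → Y` and `X → Z` (conditionally independent
given `X`) with strictly positive pmfs and centered perturbations `ψ_Y`, `ψ_Z`, the mutual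
information obeys `lim_{ε → 0} ( I_ε(X;Y,Z) − I_ε(X;Y) − I_ε(X;Z) ) / ε² = 0`. -/
theorem very_noisy_channels_mutual_info (pX : X → ℝ) (pY : Y → ℝ) (pZ : Z → ℝ)
    (hpX : ∀ x, 0 < pX x) (hpY : ∀ y, 0 < pY y) (hpZ : ∀ z, 0 < pZ z)
    (hpX1 : ∑ x, pX x = 1) (hpY1 : ∑ y, pY y = 1) (hpZ1 : ∑ z, pZ z = 1)
    (ψY : Y → X → ℝ) (ψZ : Z → X → ℝ)
    (hψY : ∀ x, ∑ y, pY y * ψY y x = 0) (hψZ : ∀ x, ∑ z, pZ z * ψZ z x = 0) :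
    Filter.Tendsto
      (fun ε : ℝ =>
        (vncIXYZ pX pY pZ ψY ψZ ε - vncIXY pX pY pZ ψY ψZ ε - vncIXZ pX pY pZ ψY ψZ ε) / ε ^ 2)
      (nhdsWithin 0 {(0 : ℝ)}ᶜ) (nhds 0) :=
  very_noisy_channels_mutual_info_general pX pY pZ hpX1 hpY1 hpZ1 ψY ψZ hψY hψZ
end
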